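/- arXiv:2011.10733 — 4 statements merged into one kernel-verified Lean document; each statement's English description precedes it below -/
import Mathlib

section
/- If X is a normal topological space and f, g, h : X → Y are continuous maps, then D(f,h) ≤ D(f,g) + D(g,h). -/
/-!
Let `U₀, …, Uₙ` be an open cover on whose members `f ≃ g`, and `V₀, …, Vₘ` one on whose members
`g ≃ h`, and take partitions of unity `ρ`, `σ` subordinate to them. For `k ≤ n + m` let `W_k` be
the set of points at which one of the products `ρᵢ σⱼ` with `i + j = k` is positive and strictly
larger than all others. Then `W_k` is the disjoint union of open pieces lying in some `Uᵢ ∩ Vⱼ`,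
on each of which `f ≃ g ≃ h`, and homotopies on disjoint open sets glue. The `W_k` cover `X`: at
`x`, take the largest `i` and `j` with `ρᵢ x > 0` and `σⱼ x > 0`; then `ρᵢ σⱼ` is the only product
on level `i + j` that does not vanish at `x`.
-/

open ContinuousMap Set ENNReal

/-- Homotopic distance between continuous maps `f g : C(X, Y)`: the least `k`
such that some open cover `U_0, ..., U_k` of `X` satisfies
`f|_{U i} ≃ g|_{U i}` for all `i`; `⊤` if no such cover exists. -/
noncomputable def hD {X Y : Type*} [TopologicalSpace X] [TopologicalSpace Y]
    (f g : C(X, Y)) : ℕ∞ :=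
  sInf {n : ℕ∞ | ∃ k : ℕ, n = k ∧ ∃ U : Fin (k + 1) → Set X,
    (∀ i, IsOpen (U i)) ∧ (⋃ i, U i) = univ ∧
    ∀ i, (f.restrict (U i)).Homotopic (g.restrict (U i))}

/-- The open ball of radius `r` around `f` for the homotopic distance. -/
noncomputable def hBall {X Y : Type*} [TopologicalSpace X] [TopologicalSpace Y]
    (f : C(X, Y)) (r : ℝ) : Set C(X, Y) :=
  {g | (hD f g : ℝ≥0∞) < ENNReal.ofReal r}

/-- The topology on `Map(X,Y)` induced by the homotopic distance pseudometric,
generated by the open balls. -/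
noncomputable def hTop (X Y : Type*) [TopologicalSpace X] [TopologicalSpace Y] :
    TopologicalSpace C(X, Y) :=
  TopologicalSpace.generateFrom {s | ∃ (f : C(X, Y)) (r : ℝ), 0 < r ∧ s = hBall f r}

open Function Topology

section Homotopic

variable {X Y : Type*} [TopologicalSpace X] [TopologicalSpace Y]

namespace ContinuousMap.Homotopic

theorem restrict_mono {f g : C(X, Y)} {s t : Set X} (hst : s ⊆ t)
    (hfg : (f.restrict t).Homotopic (g.restrict t)) :
    (f.restrict s).Homotopic (g.restrict s) :=
  hfg.comp (.refl (inclusion hst))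

/-- Each of the sets is clopen in the union, so the homotopies glue. -/
theorem restrict_iUnion {ι : Type*} {f g : C(X, Y)} {S : ι → Set X}
    (hSo : ∀ i, IsOpen (S i)) (hSd : Pairwise (Disjoint on S))
    (hfg : ∀ i, (f.restrict (S i)).Homotopic (g.restrict (S i))) :
    (f.restrict (⋃ i, S i)).Homotopic (g.restrict (⋃ i, S i)) := by
  have H := fun i => (hfg i).some
  let T : ι → Set (unitInterval × ↥(⋃ i, S i)) := fun i => {p | (p.2 : X) ∈ S i}
  let φ : ∀ i, C(T i, Y) := fun i =>
    (H i).toContinuousMap.comp ⟨fun p => (p.1.1, ⟨p.1.2, p.2⟩), by fun_prop⟩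
  have hφ : ∀ i j p (hi : p ∈ T i) (hj : p ∈ T j), φ i ⟨p, hi⟩ = φ j ⟨p, hj⟩ := by
    intro i j p hi hj
    obtain rfl : i = j := hSd.eq (not_disjoint_iff.2 ⟨_, hi, hj⟩)
    rfl
  have hT : ∀ p, ∃ i, T i ∈ 𝓝 p := fun p =>
    (mem_iUnion.1 p.2.2).imp fun i hi => ((hSo i).preimage (by fun_prop)).mem_nhds hi
  refine ⟨⟨liftCover T φ hφ hT, fun x => ?_, fun x => ?_⟩⟩ <;>
    obtain ⟨i, hi⟩ := mem_iUnion.1 x.2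
  · exact (liftCover_coe (i := i) ⟨(0, x), hi⟩).trans ((H i).apply_zero ⟨x, hi⟩)
  · exact (liftCover_coe (i := i) ⟨(1, x), hi⟩).trans ((H i).apply_one ⟨x, hi⟩)

end ContinuousMap.Homotopic

end Homotopic

section LevelDominant

variable {X ι : Type*}

def levelDominant (ℓ : ι → ℕ) (θ : ι → X → ℝ) (p : ι) : Set X :=
  {x | 0 < θ p x ∧ ∀ q, ℓ q = ℓ p → q ≠ p → θ q x < θ p x}

theorem isOpen_levelDominant [TopologicalSpace X] [Finite ι] {ℓ : ι → ℕ} {θ : ι → X → ℝ}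
    (hθ : ∀ p, Continuous (θ p)) (p : ι) : IsOpen (levelDominant ℓ θ p) := by
  simp only [levelDominant, ofPred_and, ofPred_forall]
  exact (isOpen_lt continuous_const (hθ p)).inter <| isOpen_iInter_of_finite fun q =>
    isOpen_iInter_of_finite fun _ => isOpen_iInter_of_finite fun _ => isOpen_lt (hθ q) (hθ p)

theorem disjoint_levelDominant {ℓ : ι → ℕ} {θ : ι → X → ℝ} {p q : ι} (hpq : ℓ p = ℓ q)
    (hne : p ≠ q) : Disjoint (levelDominant ℓ θ p) (levelDominant ℓ θ q) :=
  disjoint_left.2 fun _ hp hq => (hp.2 q hpq.symm hne.symm).not_gt (hq.2 p hpq hne)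

theorem exists_mem_levelDominant_mul {n m : ℕ} {a : Fin n → X → ℝ} {b : Fin m → X → ℝ}
    {x : X} (ha : ∀ i, 0 ≤ a i x) (hb : ∀ j, 0 ≤ b j x) (ha' : ∃ i, 0 < a i x)
    (hb' : ∃ j, 0 < b j x) :
    ∃ p, x ∈ levelDominant (fun p : Fin n × Fin m => p.1.val + p.2.val)
      (fun p x => a p.1 x * b p.2 x) p := by
  obtain ⟨i, hi, hi_max⟩ := exists_max_image {i | 0 < a i x} id (toFinite _) ha'
  obtain ⟨j, hj, hj_max⟩ := exists_max_image {j | 0 < b j x} id (toFinite _) hb'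
  refine ⟨(i, j), mul_pos hi hj, fun ⟨k, l⟩ hsum hne => ?_⟩
  have hkl : k.val + l.val = i.val + j.val := hsum
  have hkl_nonpos : a k x * b l x ≤ 0 := by
    by_cases hki : k ≤ i
    · have hlj : ¬ l ≤ j := fun hlj => hne <| by
        rw [Fin.le_def] at hki hlj
        rw [Prod.mk.injEq, Fin.ext_iff, Fin.ext_iff]
        omega
      exact mul_nonpos_of_nonneg_of_nonpos (ha k) (not_lt.1 fun h => hlj (hj_max l h))
    · exact mul_nonpos_of_nonpos_of_nonneg (not_lt.1 fun h => hki (hi_max k h)) (hb l)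
  exact hkl_nonpos.trans_lt (mul_pos hi hj)

end LevelDominant

section HomotopicCover

variable {X Y : Type*} [TopologicalSpace X] [TopologicalSpace Y]

theorem exists_levelwise_disjoint_refinement [NormalSpace X] {n m : ℕ} {U : Fin n → Set X}
    {V : Fin m → Set X} (hUo : ∀ i, IsOpen (U i)) (hVo : ∀ j, IsOpen (V j))
    (hUc : ⋃ i, U i = univ) (hVc : ⋃ j, V j = univ) :
    ∃ P : Fin n × Fin m → Set X, (∀ p, IsOpen (P p)) ∧ (∀ p, P p ⊆ U p.1 ∩ V p.2) ∧
      ⋃ p, P p = univ ∧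
      ∀ p q, p.1.val + p.2.val = q.1.val + q.2.val → p ≠ q → Disjoint (P p) (P q) := by
  obtain ⟨ρ, hρ⟩ := PartitionOfUnity.exists_isSubordinate_of_locallyFinite isClosed_univ U hUo
    (locallyFinite_of_finite U) hUc.ge
  obtain ⟨σ, hσ⟩ := PartitionOfUnity.exists_isSubordinate_of_locallyFinite isClosed_univ V hVo
    (locallyFinite_of_finite V) hVc.ge
  refine ⟨levelDominant (fun p => p.1.val + p.2.val) fun p x => ρ p.1 x * σ p.2 x,
    isOpen_levelDominant fun p => (ρ p.1).continuous.mul (σ p.2).continuous,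
    fun p x hx => ⟨hρ p.1 (subset_tsupport _ (left_ne_zero_of_mul hx.1.ne')),
      hσ p.2 (subset_tsupport _ (right_ne_zero_of_mul hx.1.ne'))⟩,
    eq_univ_of_forall fun x => mem_iUnion.2 ?_,
    fun _ _ hpq hne => disjoint_levelDominant hpq hne⟩
  exact exists_mem_levelDominant_mul (ρ.nonneg · x) (σ.nonneg · x) (ρ.exists_pos (mem_univ x))
    (σ.exists_pos (mem_univ x))

def HasHomotopicCover (f g : C(X, Y)) (k : ℕ) : Prop :=
  ∃ U : Fin (k + 1) → Set X, (∀ i, IsOpen (U i)) ∧ (⋃ i, U i) = univ ∧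
    ∀ i, (f.restrict (U i)).Homotopic (g.restrict (U i))

theorem hD_eq_sInf (f g : C(X, Y)) :
    hD f g = sInf {n : ℕ∞ | ∃ k : ℕ, n = k ∧ HasHomotopicCover f g k} :=
  rfl

theorem HasHomotopicCover.hD_le {f g : C(X, Y)} {k : ℕ} (h : HasHomotopicCover f g k) :
    hD f g ≤ k :=
  sInf_le ⟨k, rfl, h⟩

theorem exists_hasHomotopicCover_of_hD_ne_top {f g : C(X, Y)} (h : hD f g ≠ ⊤) :
    ∃ k : ℕ, hD f g = k ∧ HasHomotopicCover f g k := by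
  have hS : {n : ℕ∞ | ∃ k : ℕ, n = k ∧ HasHomotopicCover f g k}.Nonempty :=
    nonempty_iff_ne_empty.2 fun he => h (by rw [hD_eq_sInf, he, sInf_empty])
  exact csInf_mem hS

theorem HasHomotopicCover.trans [NormalSpace X] {f g h : C(X, Y)} {n m : ℕ}
    (hfg : HasHomotopicCover f g n) (hgh : HasHomotopicCover g h m) :
    HasHomotopicCover f h (n + m) := by
  obtain ⟨U, hUo, hUc, hU⟩ := hfg
  obtain ⟨V, hVo, hVc, hV⟩ := hgh
  obtain ⟨P, hPo, hPUV, hPc, hPd⟩ := exists_levelwise_disjoint_refinement hUo hVo hUc hVc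
  have hlevel (p : Fin (n + 1) × Fin (m + 1)) : p.1.val + p.2.val < n + m + 1 := by omega
  refine ⟨fun k => ⋃ p : {p : Fin (n + 1) × Fin (m + 1) // p.1.val + p.2.val = k.val}, P p,
    fun k => isOpen_iUnion fun p => hPo p, eq_univ_of_forall fun x => ?_, fun k => ?_⟩
  · obtain ⟨p, hp⟩ := mem_iUnion.1 (hPc ▸ mem_univ x)
    exact mem_iUnion.2 ⟨⟨_, hlevel p⟩, mem_iUnion.2 ⟨⟨p, rfl⟩, hp⟩⟩
  · refine Homotopic.restrict_iUnion (fun p => hPo p)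
      (fun p q hne => hPd p q (p.2.trans q.2.symm) (Subtype.coe_ne_coe.2 hne)) fun p => ?_
    exact ((hU p.1.1).restrict_mono fun x hx => (hPUV p hx).1).trans
      ((hV p.1.2).restrict_mono fun x hx => (hPUV p hx).2)

end HomotopicCover

theorem stmt2 {X Y : Type*} [TopologicalSpace X] [TopologicalSpace Y] [NormalSpace X]
    (f g h : C(X, Y)) : hD f h ≤ hD f g + hD g h := by
  rcases eq_or_ne (hD f g) ⊤ with hfg | hfg
  · simp [hfg]
  rcases eq_or_ne (hD g h) ⊤ with hgh | hgh
  · simp [hgh]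
  obtain ⟨n, hn, hfg⟩ := exists_hasHomotopicCover_of_hD_ne_top hfg
  obtain ⟨m, hm, hgh⟩ := exists_hasHomotopicCover_of_hD_ne_top hgh
  rw [hn, hm, ← Nat.cast_add]
  exact (hfg.trans hgh).hD_le
end

section
/- Let X be a normal space, f a continuous map X → Y, and r a real number with 0 < r ≤ 1. Then the open ball B_r(f) = {g : X → Y continuous | D(f,g) < r} in the topology induced by the homotopic distance pseudometric carries the indiscrete (trivial) subspace topology; that is, the only open subsets of B_r(f) are ∅ and B_r(f) itself. -/
/-!
A homotopic distance below `1` is `0`, so for `r ≤ 1` every map in `B_r(f)` is homotopic to `f`.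
Since `D(h, ·)` is constant on homotopy classes, each ball contains either all or none of a
homotopy class; hence homotopic maps are inseparable for the ball topology, and the subspace
`B_r(f)`, made of mutually inseparable points, is indiscrete.
-/

open ContinuousMap Set ENNReal

namespace ContinuousMap.Homotopic

variable {X Y : Type*} [TopologicalSpace X] [TopologicalSpace Y] {f g : C(X, Y)}

theorem restrict (H : f.Homotopic g) (s : Set X) :
    (f.restrict s).Homotopic (g.restrict s) :=
  H.comp (.refl ⟨Subtype.val, continuous_subtype_val⟩)

theorem of_restrict_univ (H : (f.restrict univ).Homotopic (g.restrict univ)) :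
    f.Homotopic g :=
  H.comp (.refl (⟨fun x => ⟨x, mem_univ x⟩, continuous_id.subtype_mk _⟩ : C(X, univ)))

end ContinuousMap.Homotopic

section HomotopicDistance

variable {X Y : Type*} [TopologicalSpace X] [TopologicalSpace Y]

theorem homotopic_of_hD_lt_one {f g : C(X, Y)} (h : hD f g < 1) : f.Homotopic g := by
  obtain ⟨_, ⟨k, rfl, U, -, hU, hUfg⟩, hk⟩ := sInf_lt_iff.mp h
  obtain rfl : k = 0 := by exact_mod_cast Order.lt_one_iff.mp hk
  have hU0 : U 0 = univ :=
    eq_univ_of_forall fun x => Fin.exists_fin_one.mp (iUnion_eq_univ_iff.mp hU x)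
  exact .of_restrict_univ (hU0 ▸ hUfg 0)

theorem homotopic_of_mem_hBall {f g : C(X, Y)} {r : ℝ} (hr : r ≤ 1) (hg : g ∈ hBall f r) :
    f.Homotopic g := by
  refine homotopic_of_hD_lt_one (ENat.toENNReal_lt.mp ?_)
  exact hg.trans_le (by simpa using ofReal_le_one.mpr hr)

theorem hD_le_of_homotopic {f g₁ g₂ : C(X, Y)} (H : g₁.Homotopic g₂) : hD f g₂ ≤ hD f g₁ :=
  sInf_le_sInf fun _ ⟨k, hk, U, hUo, hU, hUf⟩ =>
    ⟨k, hk, U, hUo, hU, fun i => (hUf i).trans (H.restrict _)⟩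

theorem hD_congr_right {f g₁ g₂ : C(X, Y)} (H : g₁.Homotopic g₂) : hD f g₁ = hD f g₂ :=
  (hD_le_of_homotopic H.symm).antisymm (hD_le_of_homotopic H)

theorem mem_hBall_congr {f g₁ g₂ : C(X, Y)} {r : ℝ} (H : g₁.Homotopic g₂) :
    g₁ ∈ hBall f r ↔ g₂ ∈ hBall f r :=
  iff_of_eq (congrArg (fun n : ℕ∞ => (n : ℝ≥0∞) < ENNReal.ofReal r) (hD_congr_right H))

-- `C(X, Y)` already carries the compact-open topology, so `hTop` has to be passed explicitly.
theorem ContinuousMap.Homotopic.inseparable_hTop {g₁ g₂ : C(X, Y)} (H : g₁.Homotopic g₂) :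
    @Inseparable _ (hTop X Y) g₁ g₂ := by
  change @nhds _ (hTop X Y) g₁ = @nhds _ (hTop X Y) g₂
  rw [hTop, TopologicalSpace.nhds_generateFrom, TopologicalSpace.nhds_generateFrom]
  refine congrArg (fun S => ⨅ s ∈ S, Filter.principal s) (Set.ext fun s => ?_)
  exact and_congr_left fun ⟨_, _, _, hs⟩ => hs ▸ mem_hBall_congr H

end HomotopicDistance

theorem stmt3_general {X Y : Type*} [TopologicalSpace X] [TopologicalSpace Y]
    (f : C(X, Y)) (r : ℝ) (hr1 : r ≤ 1)
    (s : Set (hBall f r)) :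
    @IsOpen _ (TopologicalSpace.induced Subtype.val (hTop X Y)) s → s = ∅ ∨ s = univ := by
  let _ : TopologicalSpace (hBall f r) := .induced Subtype.val (hTop X Y)
  have : IndiscreteTopology (hBall f r) := .of_forall_inseparable fun g₁ g₂ => by
    have H := (homotopic_of_mem_hBall hr1 g₁.2).symm.trans (homotopic_of_mem_hBall hr1 g₂.2)
    exact (@subtype_inseparable_iff _ (hTop X Y) _ g₁ g₂).mpr H.inseparable_hTop
  exact (IndiscreteTopology.isOpen_iff s).mp

theorem stmt3 {X Y : Type*} [TopologicalSpace X] [TopologicalSpace Y] [NormalSpace X]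
    (f : C(X, Y)) (r : ℝ) (hr0 : 0 < r) (hr1 : r ≤ 1)
    (s : Set (hBall f r)) :
    @IsOpen _ (TopologicalSpace.induced Subtype.val (hTop X Y)) s → s = ∅ ∨ s = univ :=
  stmt3_general f r hr1 s
end

section
/- Let X be a normal space, f : X → Y continuous, and r > 1. If B_1(f) is a proper subset of B_r(f), then B_r(f) is not connected in the topology induced by the homotopic distance pseudometric. -/
open ContinuousMap Set ENNReal

/-! A ball of radius 1 for the homotopic distance is a homotopy class. So the ball `hBall f 1`
is open, and its complement, being a union of other homotopy classes, is open too. A preconnected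
set containing `f` therefore lies inside `hBall f 1`. -/

open Topology

section

variable {X Y : Type*} [TopologicalSpace X] [TopologicalSpace Y]

theorem ContinuousMap.homotopic_restrict_univ_iff {f g : C(X, Y)} :
    (f.restrict univ).Homotopic (g.restrict univ) ↔ f.Homotopic g :=
  ⟨fun h => by exact h.comp (.refl ((Homeomorph.Set.univ X).symm : C(X, univ))),
    fun h => h.comp (.refl (restrict univ (.id X)))⟩

theorem hD_eq_zero_iff {f g : C(X, Y)} : hD f g = 0 ↔ f.Homotopic g := by
  rw [hD, ← bot_eq_zero', sInf_eq_bot]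
  constructor
  · intro h
    obtain ⟨_, ⟨k, rfl, U, -, hcover, hhom⟩, hk⟩ := h 1 one_pos
    obtain rfl : k = 0 := by exact_mod_cast Order.lt_one_iff.mp hk
    have hU : U default = univ := (iSup_unique (ι := Fin 1) U).symm.trans hcover
    exact homotopic_restrict_univ_iff.mp (hU ▸ hhom default)
  · intro h b hb
    refine ⟨0, ⟨0, by simp, fun _ => univ, fun _ => isOpen_univ, iUnion_const _,
      fun _ => homotopic_restrict_univ_iff.mpr h⟩, hb⟩

theorem mem_hBall_one_iff {f g : C(X, Y)} : g ∈ hBall f 1 ↔ f.Homotopic g := by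
  rw [← hD_eq_zero_iff, hBall, mem_ofPred_eq, ENNReal.ofReal_one, ← ENat.toENNReal_one,
    ENat.toENNReal_lt, Order.lt_one_iff]

theorem isOpen_hBall (f : C(X, Y)) {r : ℝ} (hr : 0 < r) : IsOpen[hTop X Y] (hBall f r) :=
  .basic _ ⟨f, r, hr, rfl⟩

theorem isClopen_hBall_one (f : C(X, Y)) : @IsClopen _ (hTop X Y) (hBall f 1) := by
  let := hTop X Y
  refine ⟨isOpen_compl_iff.mp (isOpen_iff_forall_mem_open.mpr fun g hg => ?_),
    isOpen_hBall f one_pos⟩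
  refine ⟨hBall g 1, fun h hh hf => hg ?_, isOpen_hBall g one_pos, mem_hBall_one_iff.mpr (.refl g)⟩
  exact mem_hBall_one_iff.mpr ((mem_hBall_one_iff.mp hf).trans (mem_hBall_one_iff.mp hh).symm)

end

theorem stmt4_general {X Y : Type*} [TopologicalSpace X] [TopologicalSpace Y]
    (f : C(X, Y)) (r : ℝ) (hproper : hBall f 1 ⊂ hBall f r) :
    ¬ @IsPreconnected _ (hTop X Y) (hBall f r) := fun h =>
  hproper.not_subset <| @IsPreconnected.subset_isClopen _ (hTop X Y) _ _ h (isClopen_hBall_one f)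
    ⟨f, hproper.subset (mem_hBall_one_iff.mpr (.refl f)), mem_hBall_one_iff.mpr (.refl f)⟩

theorem stmt4 {X Y : Type*} [TopologicalSpace X] [TopologicalSpace Y] [NormalSpace X]
    (f : C(X, Y)) (r : ℝ) (hr : 1 < r) (hproper : hBall f 1 ⊂ hBall f r) :
    ¬ @IsPreconnected _ (hTop X Y) (hBall f r) :=
  stmt4_general f r hproper
end

section
/- For any two integers n ≠ m, the homotopic distance between the maps f_n(z) = zⁿ and f_m(z) = z^m on S¹ equals 1; that is, f_n and f_m are not homotopic, but there exist two open sets U_0, U_1 covering S¹ such that f_n restricted to U_i is homotopic to f_m restricted to U_i for i = 0, 1. -/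
open ContinuousMap Set ENNReal

/-- The degree-`n` power map on the circle. -/
noncomputable def fpow (n : ℤ) : C(Circle, Circle) :=
  ⟨fun z => z ^ n, by continuity⟩

/-!
The power map `z ↦ z ^ k` lifts to `x ↦ k x` through the universal cover `Circle.exp : ℝ → S¹`.
Given a free homotopy `F` from `f_n` to `f_m`, lift `(t, s) ↦ F (t, exp (2π s))` to `ℝ`: the
change of the lift along the loop `s ∈ [0, 1]` lies in `2πℤ` and depends continuously on `t`,
so it is the same (`2πn` and `2πm`) at both ends, forcing `n = m`.
On the complement of a point, the inclusion into `S¹` has a continuous argument `θ`, and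
`(t, z) ↦ exp (((1 - t) n + t m) θ z)` is a homotopy from `f_n` to `f_m` there; the complements
of `1` and `-1` cover the circle.
-/

open scoped Real
open unitInterval

namespace Circle

lemma sub_eq_sub_of_exp_eq_exp {X : Type*} [TopologicalSpace X] [PreconnectedSpace X]
    {f g : X → ℝ} (hf : Continuous f) (hg : Continuous g) (h : ∀ x, exp (f x) = exp (g x))
    (x y : X) : f x - g x = f y - g y :=
  isCoveringMap_exp.const_of_comp (hf.sub hg) (fun a a' => by simp [h]) x y

lemma lift_one_sub_lift_zero {k : ℤ} {Γ : I → ℝ} (hΓ : Continuous Γ)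
    (h : ∀ s : I, exp (Γ s) = exp (2 * π * s) ^ k) : Γ 1 - Γ 0 = 2 * π * k := by
  have := sub_eq_sub_of_exp_eq_exp hΓ (g := fun s : I => k * (2 * π * s)) (by fun_prop)
    (fun s => by rw [h, exp_intCast_mul]) 1 0
  simp only [Icc.coe_one, Icc.coe_zero] at this
  linarith

lemma exp_pi : exp π = -1 := by
  ext
  simp [coe_exp, Complex.exp_pi_mul_I]

lemma coe_mem_slitPlane {u : Circle} (hu : u ≠ -1) : (u : ℂ) ∈ Complex.slitPlane := by
  refine Complex.mem_slitPlane_iff_arg.mpr ⟨fun harg => hu ?_, u.coe_ne_zero⟩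
  rw [← exp_arg u, harg, exp_pi]

/-- A continuous argument on the circle minus `w`: the branch of `Complex.arg` with its cut
moved from `-1` to `w`. -/
noncomputable def argCompl (w : Circle) : C(({w}ᶜ : Set Circle), ℝ) where
  toFun z := Complex.arg (-w : Circle) + Complex.arg ((z / -w : Circle) : ℂ)
  continuous_toFun := by
    refine continuous_const.add (continuous_iff_continuousAt.mpr fun z => ?_)
    have hz : (z : Circle) / -w ≠ -1 := fun h => z.2 (by
      rw [div_eq_iff_eq_mul] at h
      simpa using h)
    exact (Complex.continuousAt_arg (coe_mem_slitPlane hz)).comp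
      (f := fun z : ({w}ᶜ : Set Circle) => ((z / -w : Circle) : ℂ)) (by fun_prop)

lemma exp_comp_argCompl (w : Circle) :
    exp.comp (argCompl w) = ⟨Subtype.val, continuous_subtype_val⟩ := by
  ext1 z
  change exp (Complex.arg (-w : Circle) + Complex.arg ((z / -w : Circle) : ℂ)) = z
  rw [exp_add, exp_arg, exp_arg, mul_div_cancel]

end Circle

lemma fpow_comp_exp_comp (k : ℤ) {X : Type*} [TopologicalSpace X] (θ : C(X, ℝ)) :
    (fpow k).comp (Circle.exp.comp θ) = Circle.exp.comp ((k : ℝ) • θ) := by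
  ext x
  simp [fpow]

theorem homotopic_fpow_comp_exp_comp {X : Type*} [TopologicalSpace X] (θ : C(X, ℝ)) (n m : ℤ) :
    ((fpow n).comp (Circle.exp.comp θ)).Homotopic ((fpow m).comp (Circle.exp.comp θ)) := by
  rw [fpow_comp_exp_comp, fpow_comp_exp_comp]
  exact (ContinuousMap.Homotopic.refl Circle.exp).comp ⟨.affine _ _⟩

theorem homotopic_fpow_restrict_compl_singleton (n m : ℤ) (w : Circle) :
    ((fpow n).restrict {w}ᶜ).Homotopic ((fpow m).restrict {w}ᶜ) := by
  have := homotopic_fpow_comp_exp_comp (Circle.argCompl w) n m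
  rwa [Circle.exp_comp_argCompl] at this

theorem eq_of_homotopic_fpow {n m : ℤ} (h : (fpow n).Homotopic (fpow m)) : n = m := by
  obtain ⟨F⟩ := h
  let loop : C(I, Circle) := Circle.exp.comp ⟨fun s => 2 * π * s, by fun_prop⟩
  let H : C(I × I, Circle) := F.toContinuousMap.comp ((ContinuousMap.id I).prodMap loop)
  have H_zero (s : I) : H (0, s) = loop s ^ n := F.apply_zero _
  have H_one (s : I) : H (1, s) = loop s ^ m := F.apply_one _
  let Γ := Circle.isCoveringMap_exp.liftHomotopy H ⟨fun s : I => n * (2 * π * s), by fun_prop⟩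
    (fun s => by simp [H_zero, loop])
  have hΓ (p : I × I) : Circle.exp (Γ p) = H p :=
    congrFun (Circle.isCoveringMap_exp.liftHomotopy_lifts ..) p
  have hloop (t : I) : H (t, 0) = H (t, 1) := by
    simp [H, loop, Circle.exp_two_pi]
  have h_start : Γ (0, 1) - Γ (0, 0) = 2 * π * n :=
    Circle.lift_one_sub_lift_zero (Γ := fun s => Γ (0, s)) (by fun_prop) fun s => by
      simp [hΓ, H_zero, loop]
  have h_end : Γ (1, 1) - Γ (1, 0) = 2 * π * m :=
    Circle.lift_one_sub_lift_zero (Γ := fun s => Γ (1, s)) (by fun_prop) fun s => by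
      simp [hΓ, H_one, loop]
  have h_const : Γ (1, 1) - Γ (1, 0) = Γ (0, 1) - Γ (0, 0) :=
    Circle.sub_eq_sub_of_exp_eq_exp (f := fun t => Γ (t, 1)) (g := fun t => Γ (t, 0))
      (by fun_prop) (by fun_prop) (fun t => by simp only [hΓ, hloop]) 1 0
  have : 2 * π * n = 2 * π * m := by linarith
  exact_mod_cast mul_left_cancel₀ (by positivity) this

section HomotopicDistance

variable {X Y : Type*} [TopologicalSpace X] [TopologicalSpace Y] {f g : C(X, Y)}

theorem hD_le_one_of_cover {U₀ U₁ : Set X} (h₀ : IsOpen U₀) (h₁ : IsOpen U₁)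
    (hcover : U₀ ∪ U₁ = univ) (hf₀ : (f.restrict U₀).Homotopic (g.restrict U₀))
    (hf₁ : (f.restrict U₁).Homotopic (g.restrict U₁)) : hD f g ≤ 1 := by
  refine sInf_le ⟨1, rfl, ![U₀, U₁], ?_, ?_, ?_⟩
  · exact Fin.forall_fin_two.mpr ⟨h₀, h₁⟩
  · rw [← hcover]
    ext x
    simp [Fin.exists_fin_two]
  · exact Fin.forall_fin_two.mpr ⟨hf₀, hf₁⟩

theorem one_le_hD (h : ¬ f.Homotopic g) : 1 ≤ hD f g := by
  refine le_sInf ?_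
  rintro _ ⟨k, rfl, U, -, hcover, hU⟩
  rcases k with _ | k
  · have hmem (x : X) : x ∈ U 0 := by simpa using hcover.ge (mem_univ x)
    exact absurd ((hU 0).comp (.refl (⟨fun x => ⟨x, hmem x⟩, by fun_prop⟩ : C(X, U 0)))) h
  · exact_mod_cast Nat.le_add_left 1 k

end HomotopicDistance

theorem stmt7 (n m : ℤ) (h : n ≠ m) :
    hD (fpow n) (fpow m) = 1 ∧ ¬ (fpow n).Homotopic (fpow m) ∧
    ∃ U₀ U₁ : Set Circle, IsOpen U₀ ∧ IsOpen U₁ ∧ U₀ ∪ U₁ = univ ∧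
      ((fpow n).restrict U₀).Homotopic ((fpow m).restrict U₀) ∧
      ((fpow n).restrict U₁).Homotopic ((fpow m).restrict U₁) := by
  have not_homotopic : ¬ (fpow n).Homotopic (fpow m) := fun hnm => h (eq_of_homotopic_fpow hnm)
  have cover : ({1}ᶜ : Set Circle) ∪ {-1}ᶜ = univ := by
    simp [← compl_inter, Circle.neg_ne_self 1]
  have hom₀ := homotopic_fpow_restrict_compl_singleton n m 1
  have hom₁ := homotopic_fpow_restrict_compl_singleton n m (-1)
  have hD_le_one := hD_le_one_of_cover isOpen_compl_singleton isOpen_compl_singleton cover hom₀ hom₁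
  exact ⟨le_antisymm hD_le_one (one_le_hD not_homotopic), not_homotopic,
    {1}ᶜ, {-1}ᶜ, isOpen_compl_singleton, isOpen_compl_singleton, cover, hom₀, hom₁⟩
end
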